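/- arXiv:2404.05033 — 3 statements merged into one kernel-verified Lean document; each statement's English description precedes it below -/
import Mathlib

section
/- For any distinct i, j, k ∈ {1,2,3}, letting L̂ be the subgroup of B generated by {eᵢ, mⱼ, mₖ, s⁽²⁾ᵢⱼ, s⁽²⁾ᵢₖ}, the map ψ maps L̂ onto L̂; i.e. the T-domain wall s⁽³⁾₁,₂,₃ condenses on the (eᵢ, mⱼ, mₖ)-boundary. -/
/-- The group of excitations and codimension-2 domain walls of three copies of
the 3D toric code: triples (a, b, s) in `(ZMod 2)³ × (ZMod 2)³ × (ZMod 2)³`. -/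
abbrev B : Type := (Fin 3 → ZMod 2) × (Fin 3 → ZMod 2) × (Fin 3 → ZMod 2)

/-- The electric charge `eᵢ`. -/
def e (i : Fin 3) : B := (Pi.single i 1, 0, 0)

/-- The magnetic flux `mᵢ`. -/
def m (i : Fin 3) : B := (0, Pi.single i 1, 0)

/-- The S-domain wall `s⁽²⁾ⱼₖ`, labelled by the complementary index `i`
(that is, `s2 i = s⁽²⁾ⱼₖ` for `{i,j,k} = {1,2,3}`). -/
def s2 (i : Fin 3) : B := (0, 0, Pi.single i 1)

/-- The action of sweeping the T-domain wall `s⁽³⁾₁,₂,₃`: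
`(a, b, s) ↦ (a, b, s + b)`, i.e. `mᵢ ↦ mᵢ + s⁽²⁾ⱼₖ`. -/
def ψ (x : B) : B := (x.1, x.2.1, x.2.2 + x.2.1)

/-!
`ψ` is an additive involution (over `ZMod 2`, `s + b + b = s`), so it maps a subgroup onto
itself as soon as it maps it into itself, and that can be checked on generators: `ψ` fixes
`e i` and the S-walls and sends `m t` to `m t + s2 t`, which stays in `L̂` for `t = j, k`.
-/

def ψHom : B →+ B :=
  AddMonoidHom.mk' ψ fun x y => by
    simp only [ψ, Prod.fst_add, Prod.snd_add, Prod.mk_add_mk, add_add_add_comm]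

@[simp]
theorem ψHom_apply (x : B) : ψHom x = ψ x := rfl

theorem ψ_involutive : Function.Involutive ψ := fun x => by
  simp [ψ, add_assoc, CharTwo.add_self_eq_zero]

@[simp]
theorem ψ_e (t : Fin 3) : ψ (e t) = e t := by simp [ψ, e]

@[simp]
theorem ψ_m (t : Fin 3) : ψ (m t) = m t + s2 t := by simp [ψ, m, s2]

@[simp]
theorem ψ_s2 (t : Fin 3) : ψ (s2 t) = s2 t := by simp [ψ, s2]

theorem AddSubgroup.map_eq_self_of_involutive {G : Type*} [AddGroup G] {f : G →+ G}
    (hf : Function.Involutive f) {H : AddSubgroup G} (h : H.map f ≤ H) : H.map f = H :=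
  le_antisymm h fun x hx => ⟨f x, h ⟨x, hx, rfl⟩, hf x⟩

theorem stmt_16_general (i j k : Fin 3) :
    ψ '' ((AddSubgroup.closure {e i, m j, m k, s2 k, s2 j} : AddSubgroup B) : Set B) =
      ((AddSubgroup.closure {e i, m j, m k, s2 k, s2 j} : AddSubgroup B) : Set B) := by
  set L := AddSubgroup.closure ({e i, m j, m k, s2 k, s2 j} : Set B)
  have generator_mem {x : B} (hx : x ∈ ({e i, m j, m k, s2 k, s2 j} : Set B)) : x ∈ L :=
    AddSubgroup.subset_closure hx
  have hmap : L.map ψHom ≤ L := by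
    rw [AddSubgroup.map_le_iff_le_comap, AddSubgroup.closure_le]
    rintro x (rfl | rfl | rfl | rfl | rfl) <;>
      simp only [SetLike.mem_coe, AddSubgroup.mem_comap, ψHom_apply, ψ_e, ψ_m, ψ_s2]
    exacts [generator_mem (by simp), add_mem (generator_mem (by simp)) (generator_mem (by simp)),
      add_mem (generator_mem (by simp)) (generator_mem (by simp)), generator_mem (by simp),
      generator_mem (by simp)]
  exact congrArg SetLike.coe (AddSubgroup.map_eq_self_of_involutive ψ_involutive hmap)

theorem stmt_16 (i j k : Fin 3) (hij : i ≠ j) (hjk : j ≠ k) (hik : i ≠ k) :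
    ψ '' ((AddSubgroup.closure {e i, m j, m k, s2 k, s2 j} : AddSubgroup B) : Set B) =
      ((AddSubgroup.closure {e i, m j, m k, s2 k, s2 j} : AddSubgroup B) : Set B) :=
  stmt_16_general i j k
end

section
/- The map ψ maps onto itself the subgroup of B generated by {e₁ + e₂, e₂ + e₃, m₁ + m₂ + m₃, s⁽²⁾₂₃, s⁽²⁾₃₁, s⁽²⁾₁₂}, and also maps onto itself the subgroup generated by {m₁ + m₂, m₂ + m₃, e₁ + e₂ + e₃, s⁽²⁾₂₃ + s⁽²⁾₃₁, s⁽²⁾₃₁ + s⁽²⁾₁₂}; i.e. the T-domain wall condenses on both the m₁m₂m₃-boundary and the e₁e₂e₃-boundary (the latter augmented by its condensing composite S-walls). -/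
theorem Function.Involutive.image_eq_of_mapsTo {α : Type*} {f : α → α}
    (hf : Function.Involutive f) {s : Set α} (h : Set.MapsTo f s s) : f '' s = s := by
  refine h.image_subset.antisymm ?_
  rw [hf.image_eq_preimage_symm]
  exact h

def wallOfFlux : B →+ B where
  toFun x := (0, 0, x.2.1)
  map_zero' := rfl
  map_add' x y := by simp

theorem ψ_eq_add_wallOfFlux (x : B) : ψ x = x + wallOfFlux x :=
  Prod.ext (add_zero _).symm (Prod.ext (add_zero _).symm rfl)

@[simp]
theorem wallOfFlux_e (i : Fin 3) : wallOfFlux (e i) = 0 := rfl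

@[simp]
theorem wallOfFlux_s2 (i : Fin 3) : wallOfFlux (s2 i) = 0 := rfl

@[simp]
theorem wallOfFlux_m (i : Fin 3) : wallOfFlux (m i) = s2 i := rfl

theorem ψ_image_closure_eq {S : Set B} (hS : ∀ x ∈ S, wallOfFlux x ∈ AddSubgroup.closure S) :
    ψ '' AddSubgroup.closure S = AddSubgroup.closure S := by
  have hwall : AddSubgroup.closure S ≤ (AddSubgroup.closure S).comap wallOfFlux :=
    (AddSubgroup.closure_le _).2 hS
  refine ψ_involutive.image_eq_of_mapsTo fun x hx => ?_
  rw [ψ_eq_add_wallOfFlux]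
  exact add_mem hx (hwall hx)

theorem stmt_18 :
    ψ '' ((AddSubgroup.closure
        {e 0 + e 1, e 1 + e 2, m 0 + m 1 + m 2, s2 0, s2 1, s2 2} :
        AddSubgroup B) : Set B) =
      ((AddSubgroup.closure
        {e 0 + e 1, e 1 + e 2, m 0 + m 1 + m 2, s2 0, s2 1, s2 2} :
        AddSubgroup B) : Set B) ∧
    ψ '' ((AddSubgroup.closure
        {m 0 + m 1, m 1 + m 2, e 0 + e 1 + e 2, s2 0 + s2 1, s2 1 + s2 2} :
        AddSubgroup B) : Set B) =
      ((AddSubgroup.closure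
        {m 0 + m 1, m 1 + m 2, e 0 + e 1 + e 2, s2 0 + s2 1, s2 1 + s2 2} :
        AddSubgroup B) : Set B) := by
  constructor <;> apply ψ_image_closure_eq <;>
    simp only [Set.forall_mem_insert, Set.mem_singleton_iff, forall_eq, map_add, wallOfFlux_e,
      wallOfFlux_m, wallOfFlux_s2, add_zero, zero_mem, true_and, and_true]
  · exact add_mem (add_mem (AddSubgroup.subset_closure (by simp))
      (AddSubgroup.subset_closure (by simp))) (AddSubgroup.subset_closure (by simp))
  · exact ⟨AddSubgroup.subset_closure (by simp), AddSubgroup.subset_closure (by simp)⟩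
end

section
/- For any distinct i, j, k ∈ {1,2,3}, the map ψ maps onto itself the subgroup of B generated by {eᵢ + eⱼ, mᵢ + mⱼ, eₖ, s⁽²⁾ⱼₖ, s⁽²⁾ᵢₖ}, and also maps onto itself the subgroup generated by {eᵢ + eⱼ, mᵢ + mⱼ, mₖ, s⁽²⁾ᵢⱼ, s⁽²⁾ⱼₖ + s⁽²⁾ᵢₖ}; i.e. the T-domain wall condenses on both the fold|e-boundary (eᵢeⱼ, mᵢmⱼ, eₖ) and the fold|m-boundary (eᵢeⱼ, mᵢmⱼ, mₖ), each augmented by its condensing S-walls. -/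
lemma psi_add (x y : B) : ψ (x + y) = ψ x + ψ y := by
  simp only [ψ, Prod.fst_add, Prod.snd_add, Prod.mk_add_mk, Prod.mk.injEq]
  refine ⟨trivial, trivial, ?_⟩
  abel

lemma psi_neg (x : B) : ψ (-x) = -ψ x := by
  simp only [ψ, Prod.fst_neg, Prod.snd_neg, Prod.neg_mk, Prod.mk.injEq]
  refine ⟨trivial, trivial, ?_⟩
  abel

lemma psi_psi (x : B) : ψ (ψ x) = x := by
  simp only [ψ]
  ext1
  · rfl
  ext1
  · rfl
  show x.2.2 + x.2.1 + x.2.1 = x.2.2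
  have : x.2.1 + x.2.1 = 0 := CharTwo.add_self_eq_zero x.2.1
  rw [add_assoc, this, add_zero]

lemma psi_image (S : Set B) (h : ∀ x ∈ S, ψ x ∈ AddSubgroup.closure S) :
    ψ '' ((AddSubgroup.closure S : AddSubgroup B) : Set B) =
      ((AddSubgroup.closure S : AddSubgroup B) : Set B) := by
  have key : ∀ x ∈ AddSubgroup.closure S, ψ x ∈ AddSubgroup.closure S := by
    intro x hx
    induction hx using AddSubgroup.closure_induction with
    | mem y hy => exact h y hy
    | zero =>
      have h0 : ψ 0 = 0 := by ext <;> simp [ψ]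
      rw [h0]; exact (AddSubgroup.closure S).zero_mem
    | add a b _ _ ha hb => rw [psi_add]; exact add_mem ha hb
    | neg a _ ha => rw [psi_neg]; exact neg_mem ha
  apply Set.Subset.antisymm
  · rintro _ ⟨x, hx, rfl⟩
    exact key x hx
  · intro x hx
    exact ⟨ψ x, key x hx, psi_psi x⟩

lemma psi_e (i : Fin 3) : ψ (e i) = e i := by
  simp [ψ, e]

lemma psi_s2 (i : Fin 3) : ψ (s2 i) = s2 i := by
  simp [ψ, s2]

lemma psi_m (i : Fin 3) : ψ (m i) = m i + s2 i := by
  simp [ψ, m, s2]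

theorem stmt_19 (i j k : Fin 3) (hij : i ≠ j) (hjk : j ≠ k) (hik : i ≠ k) :
    ψ '' ((AddSubgroup.closure {e i + e j, m i + m j, e k, s2 i, s2 j} :
        AddSubgroup B) : Set B) =
      ((AddSubgroup.closure {e i + e j, m i + m j, e k, s2 i, s2 j} :
        AddSubgroup B) : Set B) ∧
    ψ '' ((AddSubgroup.closure {e i + e j, m i + m j, m k, s2 k, s2 i + s2 j} :
        AddSubgroup B) : Set B) =
      ((AddSubgroup.closure {e i + e j, m i + m j, m k, s2 k, s2 i + s2 j} :
        AddSubgroup B) : Set B) := by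
  constructor
  · apply psi_image
    intro x hx
    have g1 : e i + e j ∈ AddSubgroup.closure ({e i + e j, m i + m j, e k, s2 i, s2 j} : Set B) :=
      AddSubgroup.subset_closure (by simp)
    have g2 : m i + m j ∈ AddSubgroup.closure ({e i + e j, m i + m j, e k, s2 i, s2 j} : Set B) :=
      AddSubgroup.subset_closure (by simp)
    have g3 : e k ∈ AddSubgroup.closure ({e i + e j, m i + m j, e k, s2 i, s2 j} : Set B) :=
      AddSubgroup.subset_closure (by simp)
    have g4 : s2 i ∈ AddSubgroup.closure ({e i + e j, m i + m j, e k, s2 i, s2 j} : Set B) :=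
      AddSubgroup.subset_closure (by simp)
    have g5 : s2 j ∈ AddSubgroup.closure ({e i + e j, m i + m j, e k, s2 i, s2 j} : Set B) :=
      AddSubgroup.subset_closure (by simp)
    rcases hx with rfl | rfl | rfl | rfl | rfl
    · rw [psi_add, psi_e, psi_e]; exact g1
    · rw [psi_add, psi_m, psi_m]
      have : m i + s2 i + (m j + s2 j) = (m i + m j) + s2 i + s2 j := by abel
      rw [this]
      exact add_mem (add_mem g2 g4) g5
    · rw [psi_e]; exact g3
    · rw [psi_s2]; exact g4
    · rw [psi_s2]; exact g5
  · apply psi_image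
    intro x hx
    have g1 : e i + e j ∈
        AddSubgroup.closure ({e i + e j, m i + m j, m k, s2 k, s2 i + s2 j} : Set B) :=
      AddSubgroup.subset_closure (by simp)
    have g2 : m i + m j ∈
        AddSubgroup.closure ({e i + e j, m i + m j, m k, s2 k, s2 i + s2 j} : Set B) :=
      AddSubgroup.subset_closure (by simp)
    have g3 : m k ∈
        AddSubgroup.closure ({e i + e j, m i + m j, m k, s2 k, s2 i + s2 j} : Set B) :=
      AddSubgroup.subset_closure (by simp)
    have g4 : s2 k ∈
        AddSubgroup.closure ({e i + e j, m i + m j, m k, s2 k, s2 i + s2 j} : Set B) :=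
      AddSubgroup.subset_closure (by simp)
    have g5 : s2 i + s2 j ∈
        AddSubgroup.closure ({e i + e j, m i + m j, m k, s2 k, s2 i + s2 j} : Set B) :=
      AddSubgroup.subset_closure (by simp)
    rcases hx with rfl | rfl | rfl | rfl | rfl
    · rw [psi_add, psi_e, psi_e]; exact g1
    · rw [psi_add, psi_m, psi_m]
      have : m i + s2 i + (m j + s2 j) = (m i + m j) + (s2 i + s2 j) := by abel
      rw [this]
      exact add_mem g2 g5
    · rw [psi_m]; exact add_mem g3 g4
    · rw [psi_s2]; exact g4
    · rw [psi_add, psi_s2, psi_s2]; exact g5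
end
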